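/- Let d ≥ 1, E := ℝ^d × ℝ^d with the Euclidean inner product, J : E → E the linear map J(q,p) = (p,−q), α ≠ 0 a real number, and L := α • J. Let p be odd with 1 ≤ p ≤ s, and let α_1, …, α_s be real numbers with α_k = 1/k! for all k ≤ p; set α_{p+1} := 0 if p = s. Fix u₀ ∈ E with u₀ ≠ 0 and for h ≠ 0 define u₊(h) := u₀ + Σ_{k=1}^{s} α_k h^k L^k u₀ and γ(h) := 2⟨u₀ − u₊(h), u₀⟩ / ‖u₊(h) − u₀‖². Then, as h → 0, γ(h) = 1 − 2·(−1)^{(p+1)/2}·(α_{p+1} − 1/(p+1)!)·(α h)^{p−1} + O(h^{p+1}). -/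

import Mathlib

/-!
Since `J² = -1`, the powers of `L = α J` act on `u₀` as powers of `α i` act on `ℂ`, so
`u₊(h) - u₀ = z • u₀` with `z = R(i α h) - 1` for the stability polynomial `R`, and
`γ(h) = -2 Re z / |z|²` depends only on `x = α h`. With `b = α_{p+1} - 1/(p+1)!`, the error
`γ - 1 + 2 (-1)^{(p+1)/2} b x^{p-1}` equals `N(i x) / |z|²` for the polynomial
`N(X) = 1 - R(X) R(-X) - 2 b X^{p-1} (R(X) - 1) (R(-X) - 1)`. Modulo `X^{p+2}` we have
`R ≡ exp + b X^{p+1}`, and `exp(X) exp(-X) = 1` makes `N` vanish there; since `N` is even and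
`p + 2` is odd, in fact `X^{p+3} ∣ N`. As `|z| ≍ |x|`, the quotient is `O(x^{p+1})`.
-/

open scoped RealInnerProductSpace
open Asymptotics Filter Topology

noncomputable section

/-- The phase space `E = ℝ^d × ℝ^d`, equipped with the Euclidean inner product. -/
abbrev E (d : ℕ) : Type :=
  WithLp 2 (EuclideanSpace ℝ (Fin d) × EuclideanSpace ℝ (Fin d))

/-- The canonical symplectic rotation `J(q,p) = (p, -q)` as a continuous linear map. -/
def Jclm (d : ℕ) : E d →L[ℝ] E d :=
  ((WithLp.prodContinuousLinearEquiv 2 ℝ (EuclideanSpace ℝ (Fin d))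
      (EuclideanSpace ℝ (Fin d))).symm : _ →L[ℝ] E d) ∘L
    ((ContinuousLinearMap.snd ℝ (EuclideanSpace ℝ (Fin d)) (EuclideanSpace ℝ (Fin d))).prod
      (-(ContinuousLinearMap.fst ℝ (EuclideanSpace ℝ (Fin d)) (EuclideanSpace ℝ (Fin d))))) ∘L
    ((WithLp.prodContinuousLinearEquiv 2 ℝ (EuclideanSpace ℝ (Fin d))
      (EuclideanSpace ℝ (Fin d))) : E d →L[ℝ] _)

namespace Jclm

variable {d : ℕ}

@[simp] lemma apply_apply (u : E d) : Jclm d (Jclm d u) = -u := rfl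

@[simp] lemma inner_apply_self (u : E d) : ⟪Jclm d u, u⟫ = 0 := by
  simp [Jclm, WithLp.prod_inner_apply]
  linarith [real_inner_comm (WithLp.fst u) (WithLp.snd u)]

@[simp] lemma inner_self_apply (u : E d) : ⟪u, Jclm d u⟫ = 0 := by
  rw [real_inner_comm, inner_apply_self]

@[simp] lemma inner_apply_apply (u v : E d) : ⟪Jclm d u, Jclm d v⟫ = ⟪u, v⟫ := by
  simp [Jclm, WithLp.prod_inner_apply]
  ring

/-- `z ↦ z • u` for the complex structure `i ↦ J` on `E d`. -/
def complexSMulRight (u : E d) : ℂ →ₗ[ℝ] E d :=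
  Complex.reLm.smulRight u + Complex.imLm.smulRight (Jclm d u)

lemma complexSMulRight_apply (u : E d) (z : ℂ) :
    complexSMulRight u z = z.re • u + z.im • Jclm d u := rfl

lemma apply_complexSMulRight (u : E d) (z : ℂ) :
    Jclm d (complexSMulRight u z) = complexSMulRight u (Complex.I * z) := by
  simp [complexSMulRight_apply]
  module

lemma pow_smul_apply (α : ℝ) (k : ℕ) (u : E d) :
    ((α • Jclm d) ^ k) u = complexSMulRight u (((α : ℂ) * Complex.I) ^ k) := by
  induction k with
  | zero => simp [complexSMulRight_apply]
  | succ k ih =>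
    rw [pow_succ', mul_apply_eq_comp, ih, smul_apply, apply_complexSMulRight,
      ← (complexSMulRight u).map_smul_of_tower]
    congr 1
    simp only [Complex.real_smul]
    ring

lemma inner_complexSMulRight_self (u : E d) (z : ℂ) :
    ⟪complexSMulRight u z, u⟫ = z.re * ‖u‖ ^ 2 := by
  rw [complexSMulRight_apply, inner_add_left, real_inner_smul_left, real_inner_smul_left,
    inner_apply_self, real_inner_self_eq_norm_sq]
  ring

lemma norm_complexSMulRight_sq (u : E d) (z : ℂ) :
    ‖complexSMulRight u z‖ ^ 2 = Complex.normSq z * ‖u‖ ^ 2 := by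
  rw [← real_inner_self_eq_norm_sq, complexSMulRight_apply]
  simp only [inner_add_left, inner_add_right, real_inner_smul_left, real_inner_smul_right,
    inner_apply_self, inner_self_apply, inner_apply_apply]
  rw [real_inner_self_eq_norm_sq, Complex.normSq_apply]
  ring

lemma two_mul_inner_neg_complexSMulRight_div {u : E d} (hu : u ≠ 0) (w : ℂ) :
    2 * ⟪-complexSMulRight u w, u⟫ / ‖complexSMulRight u w‖ ^ 2
      = -2 * w.re / Complex.normSq w := by
  have hu2 : ‖u‖ ^ 2 ≠ 0 := by positivity
  rw [inner_neg_left, inner_complexSMulRight_self, norm_complexSMulRight_sq,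
    show 2 * -(w.re * ‖u‖ ^ 2) = -2 * w.re * ‖u‖ ^ 2 by ring, mul_div_mul_right _ _ hu2]

lemma sum_smul_pow_smul_apply (a : ℕ → ℝ) (s : ℕ) (α h : ℝ) (u : E d) :
    ∑ k ∈ Finset.Icc 1 s, (a k * h ^ k) • ((α • Jclm d) ^ k) u
      = complexSMulRight u
          (∑ k ∈ Finset.Icc 1 s, (a k : ℂ) * ((α * h : ℝ) * Complex.I) ^ k) := by
  simp only [pow_smul_apply, ← map_smul, ← map_sum, Complex.real_smul]
  congr 1
  refine Finset.sum_congr rfl fun k _ => ?_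
  push_cast
  ring

end Jclm

lemma Asymptotics.IsBigO.comp_const_mul_pow {F : Type*} [Norm F] {f : ℝ → F} {α : ℝ}
    {n : ℕ} (hα : α ≠ 0) (hf : f =O[𝓝[≠] 0] fun x => x ^ n) :
    (fun h => f (α * h)) =O[𝓝[≠] 0] fun h => h ^ n := by
  have hαh : Tendsto (α * ·) (𝓝[≠] 0) (𝓝[≠] 0) := by
    have := (continuous_const_mul α).continuousWithinAt.tendsto_nhdsWithin (x := 0)
      (s := {0}ᶜ) (t := {0}ᶜ) fun x hx => mul_ne_zero hα hx
    rwa [mul_zero] at this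
  have hpow : (fun h : ℝ => (α * h) ^ n) =O[𝓝[≠] 0] fun h => h ^ n := by
    simpa only [mul_pow] using (isBigO_refl _ _).const_mul_left (α ^ n)
  exact (hf.comp_tendsto hαh).trans hpow

-- Modulo `X ^ (2t+3)`, with `y = X`: `e = exp X`, `e' = exp (-X)` and `R = e + b y ^ (2t+2)`.
lemma relaxation_numerator_eq_zero_of_pow_eq_zero {A : Type*} [CommRing A] {y b e e' g g' : A}
    {t : ℕ} (hy : y ^ (2 * t + 3) = 0) (hee : e * e' = 1)
    (he : e = 1 + y + y ^ 2 * g) (he' : e' = 1 - y + y ^ 2 * g') :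
    1 - (e + b * y ^ (2 * t + 2)) * (e' + b * y ^ (2 * t + 2))
      - 2 * b * y ^ (2 * t) * ((e + b * y ^ (2 * t + 2) - 1) * (e' + b * y ^ (2 * t + 2) - 1))
      = 0 := by
  subst he he'
  linear_combination -hee + (-b * y * (g + g') - b ^ 2 * y ^ (2 * t) * y - 2 * b * (g' - g)
    - 2 * b * y * (g * g' + b * y ^ (2 * t) * (g + g') + b ^ 2 * y ^ (4 * t))) * hy

namespace PowerSeries

variable {A : Type*} [CommRing A]

lemma evalNegHom_evalNegHom (φ : A⟦X⟧) : evalNegHom (evalNegHom φ) = φ := by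
  ext n
  simp [evalNegHom, coeff_rescale, ← mul_assoc, ← mul_pow]

lemma evalNegHom_C (a : A) : evalNegHom (C a) = C a := by
  ext n
  rw [evalNegHom, coeff_rescale, coeff_C]
  split_ifs with hn <;> simp [hn]

lemma X_pow_dvd_evalNegHom {n : ℕ} {φ : A⟦X⟧} (h : X ^ n ∣ φ) :
    X ^ n ∣ evalNegHom φ := by
  have := map_dvd evalNegHom h
  rw [map_pow, evalNegHom_X, neg_pow] at this
  exact (dvd_mul_left _ _).trans this

lemma X_pow_succ_dvd_of_evalNegHom_eq [NoZeroDivisors A] [CharZero A] {n : ℕ} (hn : Odd n)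
    {φ : A⟦X⟧} (hφ : evalNegHom φ = φ) (h : X ^ n ∣ φ) : X ^ (n + 1) ∣ φ := by
  rw [X_pow_dvd_iff] at h ⊢
  intro m hm
  rcases Nat.lt_succ_iff_lt_or_eq.mp hm with hm | rfl
  · exact h m hm
  · have := congrArg (coeff m) hφ
    rwa [evalNegHom, coeff_rescale, hn.neg_one_pow, neg_one_mul,
      CharZero.neg_eq_self_iff] at this

def relaxationNumerator (r : A⟦X⟧) (b : A) (t : ℕ) : A⟦X⟧ :=
  1 - r * evalNegHom r - 2 * C b * X ^ (2 * t) * ((r - 1) * (evalNegHom r - 1))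

lemma evalNegHom_relaxationNumerator (r : A⟦X⟧) (b : A) (t : ℕ) :
    evalNegHom (relaxationNumerator r b t) = relaxationNumerator r b t := by
  simp only [relaxationNumerator, map_sub, map_mul, map_pow, map_one, map_ofNat, evalNegHom_X,
    evalNegHom_C, evalNegHom_evalNegHom, (even_two_mul t).neg_pow]
  ring

variable [Algebra ℚ A]

lemma X_sq_dvd_exp_sub : X ^ 2 ∣ exp A - 1 - X := by
  rw [X_pow_dvd_iff]
  intro m hm
  interval_cases m <;> simp [coeff_exp, coeff_X, coeff_one]

lemma X_pow_dvd_relaxationNumerator {t : ℕ} {r : A⟦X⟧} {b : A}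
    (hr : X ^ (2 * t + 3) ∣ r - exp A - C b * X ^ (2 * t + 2)) :
    X ^ (2 * t + 3) ∣ relaxationNumerator r b t := by
  let π := Ideal.Quotient.mk (Ideal.span {(X : A⟦X⟧) ^ (2 * t + 3)})
  have hπ {φ ψ : A⟦X⟧} (h : X ^ (2 * t + 3) ∣ φ - ψ) : π φ = π ψ :=
    Ideal.Quotient.eq.mpr (Ideal.mem_span_singleton.mpr h)
  obtain ⟨g, hg⟩ := X_sq_dvd_exp_sub (A := A)
  obtain ⟨g', hg'⟩ := X_pow_dvd_evalNegHom (X_sq_dvd_exp_sub (A := A))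
  have hr' := X_pow_dvd_evalNegHom hr
  simp only [map_sub, map_mul, map_pow, evalNegHom_X, evalNegHom_C, map_one,
    (show Even (2 * t + 2) from ⟨t + 1, by ring⟩).neg_pow] at hg' hr'
  have hX : π X ^ (2 * t + 3) = 0 := by
    rw [← map_pow, Ideal.Quotient.eq_zero_iff_dvd]
  have hee : π (exp A) * π (evalNegHom (exp A)) = 1 := by
    rw [← map_mul, exp_mul_exp_neg_eq_one, map_one]
  have he : π (exp A) = 1 + π X + π X ^ 2 * π g := by
    linear_combination (by simpa using congrArg π hg : π (exp A) - 1 - π X = π X ^ 2 * π g)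
  have he' : π (evalNegHom (exp A)) = 1 - π X + π X ^ 2 * π g' := by
    linear_combination
      (by simpa using congrArg π hg' : π (evalNegHom (exp A)) - 1 + π X = π X ^ 2 * π g')
  have hr₁ : π r = π (exp A) + π (C b) * π X ^ (2 * t + 2) := by
    rw [hπ (ψ := exp A + C b * X ^ (2 * t + 2)) (by rwa [← sub_sub]), map_add, map_mul, map_pow]
  have hr₂ : π (evalNegHom r) = π (evalNegHom (exp A)) + π (C b) * π X ^ (2 * t + 2) := by
    rw [hπ (ψ := evalNegHom (exp A) + C b * X ^ (2 * t + 2)) (by rwa [← sub_sub]), map_add,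
      map_mul, map_pow]
  rw [relaxationNumerator, ← Ideal.Quotient.eq_zero_iff_dvd]
  simp only [map_sub, map_mul, map_pow, map_one, map_ofNat]
  rw [hr₁, hr₂]
  exact relaxation_numerator_eq_zero_of_pow_eq_zero hX hee he he'

end PowerSeries

namespace Polynomial

def stabilityPolynomial {A : Type*} [Semiring A] (a : ℕ → A) (s : ℕ) : A[X] :=
  1 + ∑ k ∈ Finset.Icc 1 s, C (a k) * X ^ k

lemma coeff_stabilityPolynomial {A : Type*} [Semiring A] (a : ℕ → A) (s k : ℕ) :
    (stabilityPolynomial a s).coeff k = if k = 0 then 1 else if k ≤ s then a k else 0 := by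
  simp only [stabilityPolynomial, coeff_add, coeff_one, finsetSum_coeff, coeff_C_mul_X_pow,
    Finset.sum_ite_eq, Finset.mem_Icc]
  split_ifs <;> first | omega | simp

lemma coeff_stabilityPolynomial_of_le {K : Type*} [DivisionRing K] {a : ℕ → K} {s p : ℕ}
    (hps : p ≤ s) (ha : ∀ k, 1 ≤ k → k ≤ p → a k = 1 / k.factorial) :
    ∀ k ≤ p, (stabilityPolynomial a s).coeff k = 1 / k.factorial := by
  intro k hk
  rw [coeff_stabilityPolynomial]
  split_ifs with h0 hks
  · simp [h0]
  · exact ha k (by omega) hk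
  · omega

lemma coeff_stabilityPolynomial_succ {A : Type*} [Semiring A] {a : ℕ → A} {s p : ℕ}
    (hps : p ≤ s) (ha : p = s → a (p + 1) = 0) :
    (stabilityPolynomial a s).coeff (p + 1) = a (p + 1) := by
  rw [coeff_stabilityPolynomial, if_neg p.succ_ne_zero]
  split_ifs with hs
  · rfl
  · exact (ha (by omega)).symm

lemma aeval_stabilityPolynomial_sub_one (a : ℕ → ℝ) (s : ℕ) (z : ℂ) :
    aeval z (stabilityPolynomial a s) - 1 = ∑ k ∈ Finset.Icc 1 s, (a k : ℂ) * z ^ k := by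
  simp [stabilityPolynomial]

section Numerator

variable {A : Type*} [CommRing A]

lemma coe_comp_neg_X (f : A[X]) :
    ((f.comp (-X) : A[X]) : PowerSeries A) = PowerSeries.evalNegHom f := by
  suffices (coeToPowerSeries.ringHom : A[X] →+* PowerSeries A).comp (compRingHom (-X))
      = PowerSeries.evalNegHom.comp coeToPowerSeries.ringHom from congrArg (· f) this
  refine ringHom_ext (fun a => ?_) ?_ <;> simp [PowerSeries.evalNegHom_C]

lemma X_pow_dvd_of_coe {n : ℕ} {f : A[X]} (h : PowerSeries.X ^ n ∣ (f : PowerSeries A)) :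
    X ^ n ∣ f := by
  rw [PowerSeries.X_pow_dvd_iff] at h
  rw [X_pow_dvd_iff]
  simpa using h

/-- At `X = i x`, this is `(γ(x) - 1 - 2 b (i x)^(2t)) |R(i x) - 1|²`, where `γ` is the
`relaxationParameter` of `R`. -/
def relaxationNumerator (R : A[X]) (b : A) (t : ℕ) : A[X] :=
  1 - R * R.comp (-X) - 2 * C b * X ^ (2 * t) * ((R - 1) * (R.comp (-X) - 1))

lemma coe_relaxationNumerator (R : A[X]) (b : A) (t : ℕ) :
    (relaxationNumerator R b t : PowerSeries A) = PowerSeries.relaxationNumerator R b t := by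
  have h2 : ((2 : A[X]) : PowerSeries A) = 2 := map_ofNat coeToPowerSeries.ringHom 2
  simp only [relaxationNumerator, PowerSeries.relaxationNumerator]
  push_cast [coe_comp_neg_X, h2]
  rfl

end Numerator

section Exp

variable {K : Type*} [Field K] [CharZero K]

lemma X_pow_dvd_coe_sub_exp {t : ℕ} {R : K[X]}
    (hR : ∀ k ≤ 2 * t + 1, R.coeff k = 1 / k.factorial) :
    PowerSeries.X ^ (2 * t + 3) ∣ (R : PowerSeries K) - PowerSeries.exp K
      - PowerSeries.C (R.coeff (2 * t + 2) - 1 / (2 * t + 2).factorial)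
        * PowerSeries.X ^ (2 * t + 2) := by
  rw [PowerSeries.X_pow_dvd_iff]
  intro m hm
  rw [map_sub, map_sub, coeff_coe, PowerSeries.coeff_exp, PowerSeries.coeff_C_mul_X_pow]
  rcases Nat.lt_succ_iff_lt_or_eq.mp hm with hm | rfl
  · rw [hR m (by omega), if_neg (by omega)]
    simp
  · simp

theorem X_pow_dvd_relaxationNumerator {t : ℕ} {R : K[X]}
    (hR : ∀ k ≤ 2 * t + 1, R.coeff k = 1 / k.factorial) :
    X ^ (2 * t + 4) ∣
      relaxationNumerator R (R.coeff (2 * t + 2) - 1 / (2 * t + 2).factorial) t := by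
  apply X_pow_dvd_of_coe
  rw [coe_relaxationNumerator]
  exact PowerSeries.X_pow_succ_dvd_of_evalNegHom_eq (n := 2 * t + 3) ⟨t + 1, by ring⟩
    (PowerSeries.evalNegHom_relaxationNumerator _ _ _)
    (PowerSeries.X_pow_dvd_relaxationNumerator (X_pow_dvd_coe_sub_exp hR))

end Exp

lemma aeval_comp_neg_X_ofReal_mul_I (f : ℝ[X]) (x : ℝ) :
    aeval ((x : ℂ) * Complex.I) (f.comp (-X))
      = starRingEnd ℂ (aeval ((x : ℂ) * Complex.I) f) := by
  rw [aeval_comp, ← Complex.conjAe_coe, ← aeval_algHom_apply]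
  simp

lemma isBigO_aeval_ofReal_mul_I {n : ℕ} {f : ℝ[X]} (h : X ^ n ∣ f) :
    (fun x : ℝ => aeval ((x : ℂ) * Complex.I) f) =O[𝓝 0] fun x => x ^ n := by
  obtain ⟨g, rfl⟩ := h
  have hg : (fun x : ℝ => aeval ((x : ℂ) * Complex.I) g) =O[𝓝 0] fun _ => (1 : ℝ) :=
    ((g.continuous_aeval.comp (by fun_prop)).tendsto 0).isBigO_one ℝ
  have hpow : (fun x : ℝ => ((x : ℂ) * Complex.I) ^ n) =O[𝓝 0] fun x => x ^ n :=
    isBigO_of_le _ fun x => by simp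
  simpa using hpow.mul hg

lemma aeval_relaxationNumerator (R : ℝ[X]) (b : ℝ) (t : ℕ) (x : ℝ) :
    aeval ((x : ℂ) * Complex.I) (relaxationNumerator R b t)
      = ((1 - Complex.normSq (aeval ((x : ℂ) * Complex.I) R)
          + 2 * (-1) ^ (t + 1) * b * x ^ (2 * t)
            * Complex.normSq (aeval ((x : ℂ) * Complex.I) R - 1) : ℝ) : ℂ) := by
  simp only [relaxationNumerator, map_sub, map_mul, map_pow, map_one, map_ofNat, aeval_C,
    aeval_X, aeval_comp_neg_X_ofReal_mul_I, Complex.coe_algebraMap, mul_pow, pow_mul,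
    Complex.I_sq]
  push_cast
  rw [← Complex.mul_conj, ← Complex.mul_conj, map_sub, map_one]
  ring

/-- The relaxation parameter of a method with stability polynomial `R` applied to `u' = L u`
with `L ^ 2 = -α ^ 2`, as a function of `x = α h`; it does not depend on `u₀ ≠ 0`. -/
def relaxationParameter (R : ℝ[X]) (x : ℝ) : ℝ :=
  -2 * (aeval ((x : ℂ) * Complex.I) R - 1).re
    / Complex.normSq (aeval ((x : ℂ) * Complex.I) R - 1)

lemma isBigO_sq_normSq_aeval_sub_one {R : ℝ[X]} (hR : X ^ 2 ∣ R - 1 - X) :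
    (fun x : ℝ => x ^ 2) =O[𝓝 0]
      fun x => Complex.normSq (aeval ((x : ℂ) * Complex.I) R - 1) := by
  have hI : (fun x : ℝ => x) =O[𝓝 0] fun x : ℝ => (x : ℂ) * Complex.I :=
    isBigO_of_le _ fun x => by simp
  have hlin : (fun x : ℝ => aeval ((x : ℂ) * Complex.I) R - 1 - x * Complex.I)
      =o[𝓝 0] fun x : ℝ => (x : ℂ) * Complex.I :=
    ((isBigO_aeval_ofReal_mul_I hR).trans_isLittleO
      ((isLittleO_pow_pow one_lt_two).trans_isBigO (by simpa using hI))).congr_left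
      fun x => by simp
  have hx := hI.trans (by simpa using hlin.right_isBigO_add)
  exact (hx.pow 2).trans (isBigO_of_le _ fun x => by simp [Complex.normSq_eq_norm_sq])

lemma X_sq_dvd_sub_one_sub_X {R : ℝ[X]} (h₀ : R.coeff 0 = 1) (h₁ : R.coeff 1 = 1) :
    X ^ 2 ∣ R - 1 - X := by
  rw [X_pow_dvd_iff]
  intro m hm
  interval_cases m <;> simp [h₀, h₁, coeff_one]

theorem isBigO_relaxationParameter_sub {t : ℕ} {R : ℝ[X]}
    (hR : ∀ k ≤ 2 * t + 1, R.coeff k = 1 / k.factorial) :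
    (fun x => relaxationParameter R x
        - (1 - 2 * (-1) ^ (t + 1) * (R.coeff (2 * t + 2) - 1 / (2 * t + 2).factorial)
          * x ^ (2 * t)))
      =O[𝓝[≠] 0] fun x => x ^ (2 * t + 2) := by
  set b := R.coeff (2 * t + 2) - 1 / (2 * t + 2).factorial
  set z := fun x : ℝ => aeval ((x : ℂ) * Complex.I) R - 1
  have hnum : (fun x : ℝ => 1 - Complex.normSq (z x + 1)
      + 2 * (-1) ^ (t + 1) * b * x ^ (2 * t) * Complex.normSq (z x))
      =O[𝓝 0] fun x => x ^ (2 * t + 4) :=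
    Complex.isBigO_ofReal_left.mp <|
      (isBigO_aeval_ofReal_mul_I (X_pow_dvd_relaxationNumerator hR)).congr_left fun x => by
        rw [aeval_relaxationNumerator]
        simp only [z, b, sub_add_cancel]
  have hden : (fun x : ℝ => x ^ 2) =O[𝓝[≠] 0] fun x => Complex.normSq (z x) :=
    (isBigO_sq_normSq_aeval_sub_one (X_sq_dvd_sub_one_sub_X (by simpa using hR 0 (by omega))
      (by simpa using hR 1 (by omega)))).mono nhdsWithin_le_nhds
  have hz : ∀ᶠ x in 𝓝[≠] 0, Complex.normSq (z x) ≠ 0 := by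
    filter_upwards [hden.eq_zero_imp, self_mem_nhdsWithin] with x hx hx0 hzx
    exact hx0 (pow_eq_zero_iff two_ne_zero |>.mp (hx hzx))
  refine ((hnum.mono nhdsWithin_le_nhds).mul (hden.inv_rev ?_)).congr' ?_ ?_
  · filter_upwards [self_mem_nhdsWithin] with x hx h
    exact absurd (pow_eq_zero_iff two_ne_zero |>.mp h) hx
  · filter_upwards [hz] with x hx
    have hsq : Complex.normSq (z x + 1) = Complex.normSq (z x) + 2 * (z x).re + 1 := by
      simp only [Complex.normSq_apply, Complex.add_re, Complex.add_im, Complex.one_re,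
        Complex.one_im]
      ring
    change _ = -2 * (z x).re / Complex.normSq (z x) - _
    rw [hsq]
    field_simp
    ring
  · filter_upwards [self_mem_nhdsWithin] with x (hx : x ≠ 0)
    field_simp
    ring

end Polynomial

theorem relaxation_parameter_linear_expansion_general
    (d : ℕ) (α : ℝ) (hα : α ≠ 0)
    (s p : ℕ) (hpodd : Odd p) (hps : p ≤ s)
    (αc : ℕ → ℝ) (hαc : ∀ k : ℕ, 1 ≤ k → k ≤ p → αc k = 1 / (Nat.factorial k : ℝ))
    (hαs : p = s → αc (p + 1) = 0)
    (u₀ : E d) (hu₀ : u₀ ≠ 0)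
    (L : E d →L[ℝ] E d) (hL : L = α • Jclm d)
    (uplus : ℝ → E d)
    (hup : ∀ h : ℝ, uplus h = u₀ + ∑ k ∈ Finset.Icc 1 s, (αc k * h ^ k) • (L ^ k) u₀)
    (γ : ℝ → ℝ) (hγ : ∀ h : ℝ, γ h = 2 * ⟪u₀ - uplus h, u₀⟫ / ‖uplus h - u₀‖ ^ 2) :
    (fun h : ℝ => γ h - (1 - 2 * (-1 : ℝ) ^ ((p + 1) / 2)
        * (αc (p + 1) - 1 / (Nat.factorial (p + 1) : ℝ)) * (α * h) ^ (p - 1)))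
      =O[𝓝[≠] (0 : ℝ)] fun h => h ^ (p + 1) := by
  obtain ⟨t, rfl⟩ := hpodd
  set R := Polynomial.stabilityPolynomial αc s
  have hγR : ∀ h, γ h = R.relaxationParameter (α * h) := fun h => by
    rw [hγ, hup, hL, sub_add_cancel_left, add_sub_cancel_left, Jclm.sum_smul_pow_smul_apply,
      Jclm.two_mul_inner_neg_complexSMulRight_div hu₀,
      ← Polynomial.aeval_stabilityPolynomial_sub_one, Polynomial.relaxationParameter]
  refine (Polynomial.isBigO_relaxationParameter_sub
    (Polynomial.coeff_stabilityPolynomial_of_le hps hαc)).comp_const_mul_pow hα |>.congr_left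
    fun h => ?_
  rw [hγR, Polynomial.coeff_stabilityPolynomial_succ hps hαs,
    show (2 * t + 1 + 1) / 2 = t + 1 by omega, show 2 * t + 1 - 1 = 2 * t by omega]

/-- (Expansion (A.5) of the paper.) For the linear Euclidean Hamiltonian system
`u' = L u` with `L = α • J`, `α ≠ 0`, and an explicit `s`-stage Runge–Kutta method of
odd order `p ≤ s` (monomial coefficients `αc k = 1/k!` for `k ≤ p`; `αc (p+1) = 0` if
`p = s`), the relaxation parameter satisfies
`γ(h) = 1 - 2 (-1)^{(p+1)/2} (αc_{p+1} - 1/(p+1)!) (α h)^{p-1} + O(h^{p+1})`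
as `h → 0`. -/
theorem relaxation_parameter_linear_expansion
    (d : ℕ) (hd : 1 ≤ d) (α : ℝ) (hα : α ≠ 0)
    (s p : ℕ) (hpodd : Odd p) (hp1 : 1 ≤ p) (hps : p ≤ s)
    (αc : ℕ → ℝ) (hαc : ∀ k : ℕ, 1 ≤ k → k ≤ p → αc k = 1 / (Nat.factorial k : ℝ))
    (hαs : p = s → αc (p + 1) = 0)
    (u₀ : E d) (hu₀ : u₀ ≠ 0)
    (L : E d →L[ℝ] E d) (hL : L = α • Jclm d)
    (uplus : ℝ → E d)
    (hup : ∀ h : ℝ, uplus h = u₀ + ∑ k ∈ Finset.Icc 1 s, (αc k * h ^ k) • (L ^ k) u₀)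
    (γ : ℝ → ℝ) (hγ : ∀ h : ℝ, γ h = 2 * ⟪u₀ - uplus h, u₀⟫ / ‖uplus h - u₀‖ ^ 2) :
    (fun h : ℝ => γ h - (1 - 2 * (-1 : ℝ) ^ ((p + 1) / 2)
        * (αc (p + 1) - 1 / (Nat.factorial (p + 1) : ℝ)) * (α * h) ^ (p - 1)))
      =O[𝓝[≠] (0 : ℝ)] fun h => h ^ (p + 1) :=
  relaxation_parameter_linear_expansion_general d α hα s p hpodd hps αc hαc hαs u₀ hu₀ L hL uplus
    hup γ hγ
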